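/- Let P be a finite subset of the Euclidean plane ℝ² and let x ∈ 𝒱(P) be a Voronoi vertex. Then the degree of x equals the number of generators on its empty circle: the number of unordered pairs {p, p'} of distinct points of P such that x ∈ V_P(p) ∩ V_P(p') and V_P(p) ∩ V_P(p') contains more than one point equals (N_P(x)).ncard. -/

import Mathlib

open Set

abbrev Plane : Type := EuclideanSpace ℝ (Fin 2)

/-- The Voronoi cell of a generator `p` for a generating set `P`. -/
def cell (P : Set Plane) (p : Plane) : Set Plane :=
  {x : Plane | ∀ q ∈ P, dist x p ≤ dist x q}

/-- The set of nearest generators of `x` in `P`. -/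
def nearest (P : Set Plane) (x : Plane) : Set Plane :=
  {p ∈ P | ∀ q ∈ P, dist x p ≤ dist x q}

/-- The Voronoi vertex set: points with at least 3 nearest generators. -/
def vtx (P : Set Plane) : Set Plane :=
  {x : Plane | 3 ≤ (nearest P x).encard}

/-- The boundary of a point set: its points on the frontier of its convex hull. -/
def Bd (S : Set Plane) : Set Plane :=
  S ∩ frontier (convexHull ℝ S)

/-- The number of instances of cocircularity. -/
noncomputable def Ic (P : Set Plane) : ℤ :=
  ∑ᶠ x ∈ vtx P, (((nearest P x).ncard : ℤ) - 3)

/-!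
Near a Voronoi vertex `x` only the nearest generators matter, and they lie on a circle about `x`.
Moving a little from `x` in a direction `u`, one stays in the cell of a nearest generator `p`
exactly when `p` maximises `⟪u, ·⟫` on that circle, so the Voronoi edges through `x` are the pairs of nearest generators
that maximise a common linear functional: the sides of the convex polygon they span. In polar
angles about `x` these are the cyclically consecutive pairs, and `n ≥ 3` points on a circle have
exactly `n` of them.
-/

open Real Filter Topology
open scoped RealInnerProductSpace

variable {α β : Type*}

def pairs (S : Set α) (R : α → α → Prop) : Set (Set α) :=
  {e | ∃ p ∈ S, ∃ q ∈ S, p ≠ q ∧ e = {p, q} ∧ R p q}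

section Pairs

variable {S T : Set α} {R R' : α → α → Prop}

lemma pairs_eq_of_subset (hTS : T ⊆ S) (h : ∀ p ∈ S, ∀ q ∈ S, R p q ↔ p ∈ T ∧ q ∈ T ∧ R' p q) :
    pairs S R = pairs T R' := by
  ext e
  constructor
  · rintro ⟨p, hp, q, hq, hpq, rfl, hR⟩
    obtain ⟨hpT, hqT, hR'⟩ := (h p hp q hq).1 hR
    exact ⟨p, hpT, q, hqT, hpq, rfl, hR'⟩
  · rintro ⟨p, hp, q, hq, hpq, rfl, hR'⟩
    exact ⟨p, hTS hp, q, hTS hq, hpq, rfl, (h p (hTS hp) q (hTS hq)).2 ⟨hp, hq, hR'⟩⟩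

lemma pairs_congr (h : ∀ p ∈ S, ∀ q ∈ S, R p q ↔ R' p q) : pairs S R = pairs S R' :=
  pairs_eq_of_subset subset_rfl fun p hp q hq => by simp [hp, hq, h p hp q hq]

lemma pairs_eq_pairs_lt [LinearOrder α] (hR : ∀ p q, R p q → R q p) :
    pairs S R = pairs S fun p q => p < q ∧ R p q := by
  ext e
  constructor
  · rintro ⟨p, hp, q, hq, hpq, rfl, hpqR⟩
    rcases hpq.lt_or_gt with hlt | hlt
    · exact ⟨p, hp, q, hq, hpq, rfl, hlt, hpqR⟩
    · exact ⟨q, hq, p, hp, hpq.symm, pair_comm p q, hlt, hR p q hpqR⟩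
  · rintro ⟨p, hp, q, hq, hpq, rfl, -, hpqR⟩
    exact ⟨p, hp, q, hq, hpq, rfl, hpqR⟩

lemma ncard_pairs_image {f : α → β} (hf : InjOn f S) (R : β → β → Prop) :
    (pairs (f '' S) R).ncard = (pairs S fun p q => R (f p) (f q)).ncard := by
  have himage : pairs (f '' S) R = image f '' pairs S fun p q => R (f p) (f q) := by
    ext e
    constructor
    · rintro ⟨_, ⟨p, hp, rfl⟩, _, ⟨q, hq, rfl⟩, hpq, rfl, hR⟩
      exact ⟨{p, q}, ⟨p, hp, q, hq, fun h => hpq (h ▸ rfl), rfl, hR⟩, image_pair f p q⟩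
    · rintro ⟨_, ⟨p, hp, q, hq, hpq, rfl, hR⟩, rfl⟩
      exact ⟨f p, mem_image_of_mem f hp, f q, mem_image_of_mem f hq,
        fun h => hpq (hf hp hq h), image_pair f p q, hR⟩
  have hinj : InjOn (image f) (pairs S fun p q => R (f p) (f q)) := by
    rintro _ ⟨p, hp, p', hp', -, rfl, -⟩ _ ⟨q, hq, q', hq', -, rfl, -⟩ h
    exact (hf.image_eq_image_iff (pair_subset hp hp') (pair_subset hq hq')).1 h
  rw [himage, hinj.ncard_image]

end Pairs

-- Meant for `s < t`; when `t ≤ s` the first disjunct holds trivially.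
def CyclicallyConsecutive [LinearOrder α] (S : Set α) (s t : α) : Prop :=
  (∀ a ∈ S, a ≤ s ∨ t ≤ a) ∨ ∀ a ∈ S, s ≤ a ∧ a ≤ t

lemma Fin.add_one_add_one_ne {n : ℕ} (hn : 2 ≤ n) (i : Fin (n + 1)) : i + 1 + 1 ≠ i := by
  rw [add_assoc, Ne, add_eq_left, Fin.ext_iff]
  simp [Fin.val_add, Nat.mod_eq_of_lt (show 1 < n + 1 by omega),
    Nat.mod_eq_of_lt (show 2 < n + 1 by omega)]

lemma cyclicallyConsecutive_range_iff [LinearOrder α] {n : ℕ} (e : Fin (n + 1) ↪o α)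
    {i j : Fin (n + 1)} (hij : i < j) :
    CyclicallyConsecutive (range e) (e i) (e j) ↔ j = i + 1 ∨ i = 0 ∧ j = Fin.last n := by
  constructor
  · rintro (hgap | hext)
    · have hi : i < Fin.last n := hij.trans_le (Fin.le_last j)
      refine Or.inl (Fin.ext ?_)
      rw [Fin.val_add_one_of_lt hi]
      by_contra hne
      have hk : i.val + 1 < n + 1 := by omega
      rcases hgap (e ⟨i + 1, hk⟩) (mem_range_self _) with h | h
      · have := Fin.le_def.1 (e.le_iff_le.1 h); simp at this
      · have := Fin.le_def.1 (e.le_iff_le.1 h); simp at this; omega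
    · exact Or.inr ⟨nonpos_iff_eq_zero.1 (e.le_iff_le.1 (hext _ (mem_range_self 0)).1),
        le_antisymm (Fin.le_last j) (e.le_iff_le.1 (hext _ (mem_range_self _)).2)⟩
  · rintro (rfl | ⟨rfl, rfl⟩)
    · have hi := Fin.lt_add_one_iff.1 hij
      refine Or.inl ?_
      rintro _ ⟨k, rfl⟩
      simp only [e.le_iff_le, Fin.le_def, Fin.val_add_one_of_lt hi]
      omega
    · refine Or.inr ?_
      rintro _ ⟨k, rfl⟩
      exact ⟨e.monotone (Fin.zero_le k), e.monotone (Fin.le_last k)⟩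

theorem ncard_pairs_cyclicallyConsecutive [LinearOrder α] {S : Set α} (hS : S.Finite)
    (h3 : 3 ≤ S.ncard) :
    (pairs S fun s t => s < t ∧ CyclicallyConsecutive S s t).ncard = S.ncard := by
  obtain ⟨n, hn⟩ : ∃ n, S.ncard = n + 1 := ⟨S.ncard - 1, by omega⟩
  obtain ⟨e, rfl⟩ : ∃ e : Fin (n + 1) ↪o α, range e = S :=
    ⟨hS.toFinset.orderEmbOfFin (by rw [← ncard_eq_toFinset_card S hS, hn]), by simp⟩
  set g : Fin (n + 1) → Set α := fun i => {e i, e (i + 1)}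
  have hrange : (pairs (range e) fun s t => s < t ∧ CyclicallyConsecutive (range e) s t) =
      range g := by
    ext c
    constructor
    · rintro ⟨_, ⟨i, rfl⟩, _, ⟨j, rfl⟩, -, rfl, hlt, hcyc⟩
      rcases (cyclicallyConsecutive_range_iff e (e.lt_iff_lt.1 hlt)).1 hcyc with rfl | ⟨rfl, rfl⟩
      · exact ⟨i, rfl⟩
      · exact ⟨Fin.last n, by simp [g, pair_comm]⟩
    · rintro ⟨i, rfl⟩
      rcases (Fin.le_last i).lt_or_eq with hi | rfl
      · have hlt := Fin.lt_add_one_iff.2 hi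
        exact ⟨e i, mem_range_self _, e (i + 1), mem_range_self _, (e.lt_iff_lt.2 hlt).ne, rfl,
          e.lt_iff_lt.2 hlt, (cyclicallyConsecutive_range_iff e hlt).2 (Or.inl rfl)⟩
      · have hlt : 0 < Fin.last n := by simp [Fin.lt_def]; omega
        exact ⟨e 0, mem_range_self _, e (Fin.last n), mem_range_self _, (e.lt_iff_lt.2 hlt).ne,
          by simp [g, pair_comm], e.lt_iff_lt.2 hlt,
          (cyclicallyConsecutive_range_iff e hlt).2 (Or.inr ⟨rfl, rfl⟩)⟩
  have hinj : Function.Injective g := by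
    intro i j hij
    rcases pair_eq_pair_iff.1 hij with ⟨h, -⟩ | ⟨h₁, h₂⟩
    · exact e.injective h
    · obtain rfl := e.injective h₁
      exact absurd (e.injective h₂) (Fin.add_one_add_one_ne (by omega) j)
  rw [hrange, ncard_range_of_injective hinj, Nat.card_eq_fintype_card, Fintype.card_fin, hn]

def AngularSupportPair (Θ : Set ℝ) (s t : ℝ) : Prop :=
  ∃ φ, IsMaxOn (fun θ => cos (θ - φ)) Θ s ∧ IsMaxOn (fun θ => cos (θ - φ)) Θ t

lemma AngularSupportPair.symm {Θ : Set ℝ} {s t : ℝ} (h : AngularSupportPair Θ s t) :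
    AngularSupportPair Θ t s :=
  let ⟨φ, hs, ht⟩ := h
  ⟨φ, ht, hs⟩

namespace Real

variable {δ ψ : ℝ}

lemma cos_le_cos_iff_le_abs (hδ₀ : 0 ≤ δ) (hδπ : δ ≤ π) (hψ : |ψ| < 2 * π - δ) :
    cos ψ ≤ cos δ ↔ δ ≤ |ψ| := by
  rw [← cos_abs ψ]
  rcases le_or_gt |ψ| π with h | h
  · exact strictAntiOn_cos.le_iff_ge ⟨abs_nonneg ψ, h⟩ ⟨hδ₀, hδπ⟩
  · rw [← cos_two_pi_sub |ψ|, strictAntiOn_cos.le_iff_ge ⟨by linarith, by linarith⟩ ⟨hδ₀, hδπ⟩]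
    constructor <;> intro <;> linarith

lemma cos_le_cos_iff_abs_le (hδ₀ : 0 ≤ δ) (hδπ : δ ≤ π) (hψ : |ψ| < 2 * π - δ) :
    cos δ ≤ cos ψ ↔ |ψ| ≤ δ := by
  rw [← cos_abs ψ]
  rcases le_or_gt |ψ| π with h | h
  · exact strictAntiOn_cos.le_iff_ge ⟨hδ₀, hδπ⟩ ⟨abs_nonneg ψ, h⟩
  · rw [← cos_two_pi_sub |ψ|, strictAntiOn_cos.le_iff_ge ⟨hδ₀, hδπ⟩ ⟨by linarith, by linarith⟩]
    constructor <;> intro <;> linarith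

-- `cos (s - φ) = cos (t - φ)` forces `φ ≡ (s + t) / 2 (mod π)`.
lemma cos_sub_eq_sign_mul_cos_sub_midpoint {s t φ : ℝ} (hst : s < t) (hts : t < s + 2 * π)
    (h : cos (s - φ) = cos (t - φ)) :
    ∃ ε : ℝ, (ε = 1 ∨ ε = -1) ∧ ∀ θ, cos (θ - φ) = ε * cos (θ - (s + t) / 2) := by
  have hsin : sin ((s + t) / 2 - φ) = 0 := by
    have hpos : 0 < sin ((t - s) / 2) := sin_pos_of_pos_of_lt_pi (by linarith) (by linarith)
    have h' := cos_sub_cos (s - φ) (t - φ)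
    rw [h, sub_self, show (s - φ + (t - φ)) / 2 = (s + t) / 2 - φ by ring,
      show (s - φ - (t - φ)) / 2 = -((t - s) / 2) by ring, sin_neg] at h'
    nlinarith
  refine ⟨cos ((s + t) / 2 - φ), sq_eq_one_iff.1 ?_, fun θ => ?_⟩
  · nlinarith [sin_sq_add_cos_sq ((s + t) / 2 - φ)]
  · rw [show θ - φ = (θ - (s + t) / 2) + ((s + t) / 2 - φ) by ring, cos_add, hsin]
    ring

end Real

theorem angularSupportPair_iff {Θ : Set ℝ} (hΘ : Θ ⊆ Ioc (-π) π) {s t : ℝ} (hs : s ∈ Θ)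
    (ht : t ∈ Θ) (hst : s < t) : AngularSupportPair Θ s t ↔ CyclicallyConsecutive Θ s t := by
  obtain ⟨hs₁, hs₂⟩ := hΘ hs
  obtain ⟨ht₁, ht₂⟩ := hΘ ht
  set m := (s + t) / 2 with hm
  set δ := (t - s) / 2 with hδ
  have hδ₀ : 0 ≤ δ := by linarith
  have hδπ : δ ≤ π := by linarith
  have hwrap : ∀ θ ∈ Θ, |θ - m| < 2 * π - δ := fun θ hθ => by
    obtain ⟨hθ₁, hθ₂⟩ := hΘ hθ
    rw [abs_lt]
    constructor <;> linarith
  have houtside : ∀ θ, δ ≤ |θ - m| ↔ θ ≤ s ∨ t ≤ θ := fun θ => by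
    rw [le_abs']
    constructor <;> rintro (h | h) <;> first | (left; linarith) | (right; linarith)
  have hinside : ∀ θ, |θ - m| ≤ δ ↔ s ≤ θ ∧ θ ≤ t := fun θ => by
    rw [abs_le]
    constructor <;> rintro ⟨h₁, h₂⟩ <;> constructor <;> linarith
  have hs_m : cos (s - m) = cos δ := by rw [← cos_neg]; congr 1; ring
  have ht_m : cos (t - m) = cos δ := by congr 1; ring
  simp only [AngularSupportPair, CyclicallyConsecutive, isMaxOn_iff]
  constructor
  · rintro ⟨φ, hs_max, ht_max⟩
    obtain ⟨ε, hε, hrot⟩ := cos_sub_eq_sign_mul_cos_sub_midpoint hst (by linarith)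
      (le_antisymm (ht_max s hs) (hs_max t ht))
    rcases hε with rfl | rfl
    · refine Or.inl fun θ hθ => (houtside θ).1 ((cos_le_cos_iff_le_abs hδ₀ hδπ (hwrap θ hθ)).1 ?_)
      simpa only [hrot θ, hrot s, ← hm, one_mul, hs_m] using hs_max θ hθ
    · refine Or.inr fun θ hθ => (hinside θ).1 ((cos_le_cos_iff_abs_le hδ₀ hδπ (hwrap θ hθ)).1 ?_)
      simpa only [hrot θ, hrot s, ← hm, neg_one_mul, hs_m, neg_le_neg_iff] using hs_max θ hθ
  · rintro (hgap | hext)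
    · refine ⟨m, fun θ hθ => ?_, fun θ hθ => ?_⟩ <;>
        simp only [hs_m, ht_m] <;> rw [cos_le_cos_iff_le_abs hδ₀ hδπ (hwrap θ hθ), houtside] <;>
        exact hgap θ hθ
    · refine ⟨m + π, fun θ hθ => ?_, fun θ hθ => ?_⟩ <;>
        simp only [← sub_sub, cos_sub_pi, hs_m, ht_m, neg_le_neg_iff] <;>
        rw [cos_le_cos_iff_abs_le hδ₀ hδπ (hwrap θ hθ), hinside] <;> exact hext θ hθ

section InnerProductSpace

variable {E : Type*} [NormedAddCommGroup E] [InnerProductSpace ℝ E]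

def SupportPair (N : Set E) (p q : E) : Prop :=
  ∃ u, u ≠ 0 ∧ IsMaxOn (inner ℝ u) N p ∧ IsMaxOn (inner ℝ u) N q

lemma dist_le_dist_iff_inner_le {x y p q : E} (h : dist x p = dist x q) :
    dist y p ≤ dist y q ↔ ⟪y - x, q⟫ ≤ ⟪y - x, p⟫ := by
  have expand : ∀ z, dist y z ^ 2 = ‖y - x‖ ^ 2 - 2 * ⟪y - x, z - x⟫ + dist x z ^ 2 := fun z => by
    rw [dist_eq_norm, dist_eq_norm', ← sub_sub_sub_cancel_right y z x, norm_sub_sq_real]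
  rw [← pow_le_pow_iff_left₀ dist_nonneg dist_nonneg two_ne_zero, expand, expand, h,
    inner_sub_right, inner_sub_right]
  constructor <;> intro <;> linarith

end InnerProductSpace

section VoronoiCell

variable {P : Set Plane} {x p q : Plane}

lemma dist_eq_of_mem_nearest (hp : p ∈ nearest P x) (hq : q ∈ nearest P x) :
    dist x p = dist x q :=
  le_antisymm (hp.2 q hq.1) (hq.2 p hp.1)

lemma nearest_subset_sphere (hp : p ∈ nearest P x) :
    nearest P x ⊆ Metric.sphere x (dist p x) := fun q hq => by
  rw [Metric.mem_sphere, dist_comm, ← dist_eq_of_mem_nearest hp hq, dist_comm]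

lemma isMaxOn_inner_of_mem_cell {y : Plane} (hp : p ∈ nearest P x) (hy : y ∈ cell P p) :
    IsMaxOn (inner ℝ (y - x)) (nearest P x) p :=
  isMaxOn_iff.2 fun q hq => (dist_le_dist_iff_inner_le (dist_eq_of_mem_nearest hp hq)).1 (hy q hq.1)

lemma eventually_mem_cell {u : Plane} (hP : P.Finite) (hp : p ∈ nearest P x)
    (hu : IsMaxOn (inner ℝ u) (nearest P x) p) : ∀ᶠ t in 𝓝[≥] (0 : ℝ), x + t • u ∈ cell P p := by
  have hfar : ∀ᶠ t in 𝓝 (0 : ℝ), ∀ q ∈ P \ nearest P x,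
      dist (x + t • u) p < dist (x + t • u) q := by
    rw [(hP.sdiff).eventually_all]
    rintro q ⟨hqP, hqN⟩
    have hlt : dist x p < dist x q := by
      by_contra! h
      exact hqN ⟨hqP, fun q' hq' => h.trans (hp.2 q' hq')⟩
    have hcont : Continuous fun t : ℝ => x + t • u := by fun_prop
    exact ((hcont.dist continuous_const).tendsto' 0 _ (by simp)).eventually_lt
      ((hcont.dist continuous_const).tendsto' 0 _ (by simp)) hlt
  filter_upwards [hfar.filter_mono nhdsWithin_le_nhds, self_mem_nhdsWithin] with t hfar ht q hq
  by_cases hqN : q ∈ nearest P x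
  · rw [dist_le_dist_iff_inner_le (dist_eq_of_mem_nearest hp hqN), add_sub_cancel_left,
      real_inner_smul_left, real_inner_smul_left]
    exact mul_le_mul_of_nonneg_left (isMaxOn_iff.1 hu q hqN) ht
  · exact (hfar q ⟨hq, hqN⟩).le

theorem voronoiEdge_iff (hP : P.Finite) (hp : p ∈ P) (hq : q ∈ P) :
    x ∈ cell P p ∩ cell P q ∧ (cell P p ∩ cell P q).Nontrivial ↔
      p ∈ nearest P x ∧ q ∈ nearest P x ∧ SupportPair (nearest P x) p q := by
  constructor
  · rintro ⟨⟨hxp, hxq⟩, hedge⟩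
    obtain ⟨y, ⟨hyp, hyq⟩, hyx⟩ := hedge.exists_ne x
    exact ⟨⟨hp, hxp⟩, ⟨hq, hxq⟩, y - x, sub_ne_zero.2 hyx,
      isMaxOn_inner_of_mem_cell ⟨hp, hxp⟩ hyp, isMaxOn_inner_of_mem_cell ⟨hq, hxq⟩ hyq⟩
  · rintro ⟨hpN, hqN, u, hu, hup, huq⟩
    obtain ⟨t, ⟨hyp, hyq⟩, ht⟩ := (((eventually_mem_cell hP hpN hup).and
      (eventually_mem_cell hP hqN huq)).filter_mono (nhdsWithin_mono (0 : ℝ) Ioi_subset_Ici_self)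
      |>.and self_mem_nhdsWithin).exists
    refine ⟨⟨hpN.2, hqN.2⟩, x, ⟨hpN.2, hqN.2⟩, x + t • u, ⟨hyp, hyq⟩, ?_⟩
    simp [ht.ne', hu]

end VoronoiCell

noncomputable def toComplex : Plane ≃ₗᵢ[ℝ] ℂ :=
  Complex.orthonormalBasisOneI.repr.symm

noncomputable def polarAngle (c q : Plane) : ℝ :=
  (toComplex (q - c)).arg

noncomputable def unitVec (φ : ℝ) : Plane :=
  toComplex.symm (Complex.exp (φ * Complex.I))

lemma Complex.real_inner_exp_mul_I (φ : ℝ) (z : ℂ) :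
    ⟪Complex.exp (φ * Complex.I), z⟫ = ‖z‖ * Real.cos (z.arg - φ) := by
  rw [Complex.inner, Complex.mul_re, Complex.conj_re, Complex.conj_im,
    Complex.exp_ofReal_mul_I_re, Complex.exp_ofReal_mul_I_im, ← Complex.norm_mul_cos_arg z,
    ← Complex.norm_mul_sin_arg z, Real.cos_sub]
  ring

lemma norm_unitVec (φ : ℝ) : ‖unitVec φ‖ = 1 := by
  rw [unitVec, LinearIsometryEquiv.norm_map, Complex.norm_exp_ofReal_mul_I]

lemma inner_unitVec_sub (φ : ℝ) (c q : Plane) :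
    ⟪unitVec φ, q - c⟫ = dist q c * cos (polarAngle c q - φ) := by
  rw [unitVec, ← toComplex.inner_map_map, LinearIsometryEquiv.apply_symm_apply,
    Complex.real_inner_exp_mul_I, LinearIsometryEquiv.norm_map, dist_eq_norm, polarAngle]

lemma eq_norm_smul_unitVec (u : Plane) : u = ‖u‖ • unitVec (polarAngle 0 u) := by
  apply toComplex.injective
  rw [map_smul, unitVec, LinearIsometryEquiv.apply_symm_apply, polarAngle, sub_zero,
    ← toComplex.norm_map, Complex.real_smul, Complex.norm_mul_exp_arg_mul_I]

lemma injOn_polarAngle (c : Plane) (r : ℝ) : InjOn (polarAngle c) (Metric.sphere c r) := by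
  intro p hp q hq h
  have hnorm : ‖toComplex (p - c)‖ = ‖toComplex (q - c)‖ := by
    rw [toComplex.norm_map, toComplex.norm_map, ← dist_eq_norm, ← dist_eq_norm,
      Metric.mem_sphere.1 hp, Metric.mem_sphere.1 hq]
  simpa using toComplex.injective (Complex.ext_norm_arg hnorm h)

section Cocircular

variable {N : Set Plane} {c : Plane} {r : ℝ}

lemma isMaxOn_inner_smul_unitVec_iff (hN : N ⊆ Metric.sphere c r) (hr : 0 < r) {ρ : ℝ}
    (hρ : 0 < ρ) (φ : ℝ) {p : Plane} (hp : p ∈ N) :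
    IsMaxOn (inner ℝ (ρ • unitVec φ)) N p ↔
      IsMaxOn (fun θ => cos (θ - φ)) (polarAngle c '' N) (polarAngle c p) := by
  have hinner : ∀ q ∈ N, ⟪ρ • unitVec φ, q⟫ =
      ⟪ρ • unitVec φ, c⟫ + ρ * r * cos (polarAngle c q - φ) := fun q hq => by
    rw [← Metric.mem_sphere.1 (hN hq), mul_assoc, ← inner_unitVec_sub, ← real_inner_smul_left,
      ← inner_add_right, add_sub_cancel]
  simp only [isMaxOn_iff, forall_mem_image, hinner _ hp]
  refine forall₂_congr fun q hq => ?_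
  rw [hinner q hq, add_le_add_iff_left, mul_le_mul_iff_right₀ (mul_pos hρ hr)]

lemma supportPair_iff_angularSupportPair (hN : N ⊆ Metric.sphere c r) (hr : 0 < r) {p q : Plane}
    (hp : p ∈ N) (hq : q ∈ N) :
    SupportPair N p q ↔
      AngularSupportPair (polarAngle c '' N) (polarAngle c p) (polarAngle c q) := by
  constructor
  · rintro ⟨u, hu, hup, huq⟩
    have hρ : 0 < ‖u‖ := norm_pos_iff.2 hu
    rw [eq_norm_smul_unitVec u, isMaxOn_inner_smul_unitVec_iff hN hr hρ _ hp] at hup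
    rw [eq_norm_smul_unitVec u, isMaxOn_inner_smul_unitVec_iff hN hr hρ _ hq] at huq
    exact ⟨_, hup, huq⟩
  · rintro ⟨φ, hp_max, hq_max⟩
    refine ⟨unitVec φ, norm_ne_zero_iff.1 (by simp [norm_unitVec]), ?_, ?_⟩
    · simpa using (isMaxOn_inner_smul_unitVec_iff hN hr one_pos φ hp).2 hp_max
    · simpa using (isMaxOn_inner_smul_unitVec_iff hN hr one_pos φ hq).2 hq_max

end Cocircular

theorem ncard_pairs_supportPair {N : Set Plane} {c : Plane} {r : ℝ} (hN : N.Finite)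
    (hNc : N ⊆ Metric.sphere c r) (h3 : 3 ≤ N.ncard) :
    (pairs N (SupportPair N)).ncard = N.ncard := by
  have hr : 0 < r := by
    by_contra! hr
    exact ((one_lt_ncard_iff_nontrivial_and_finite.1 (by omega)).1.mono hNc).not_subsingleton
      (Metric.subsingleton_sphere c hr)
  have hinj := (injOn_polarAngle c r).mono hNc
  set Θ := polarAngle c '' N
  have hΘ : Θ ⊆ Ioc (-π) π := image_subset_iff.2 fun q _ => Complex.arg_mem_Ioc _
  calc (pairs N (SupportPair N)).ncard
      = (pairs N fun p q => AngularSupportPair Θ (polarAngle c p) (polarAngle c q)).ncard := by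
        rw [pairs_congr fun p hp q hq => supportPair_iff_angularSupportPair hNc hr hp hq]
    _ = (pairs Θ (AngularSupportPair Θ)).ncard := (ncard_pairs_image hinj _).symm
    _ = (pairs Θ fun s t => s < t ∧ CyclicallyConsecutive Θ s t).ncard := by
        rw [pairs_eq_pairs_lt fun s t => AngularSupportPair.symm,
          pairs_congr fun s hs t ht => and_congr_right (angularSupportPair_iff hΘ hs ht)]
    _ = Θ.ncard := ncard_pairs_cyclicallyConsecutive (hN.image _) (by rwa [hinj.ncard_image])
    _ = N.ncard := hinj.ncard_image

theorem degree_eq_card_nearest (P : Set Plane) (hP : P.Finite)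
    (x : Plane) (hx : x ∈ vtx P) :
    {e : Set Plane | ∃ p ∈ P, ∃ p' ∈ P, p ≠ p' ∧ e = {p, p'} ∧
      x ∈ cell P p ∩ cell P p' ∧ (cell P p ∩ cell P p').Nontrivial}.ncard =
      (nearest P x).ncard := by
  have hN : (nearest P x).Finite := hP.subset fun _ h => h.1
  have h3 : 3 ≤ (nearest P x).ncard := by
    rw [← Nat.cast_le (α := ℕ∞), hN.cast_ncard_eq]
    exact hx
  obtain ⟨p, hp⟩ := nonempty_of_ncard_ne_zero (by omega : (nearest P x).ncard ≠ 0)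
  change (pairs P _).ncard = _
  rw [pairs_eq_of_subset (fun _ h => h.1) fun _ hp _ hq => voronoiEdge_iff hP hp hq]
  exact ncard_pairs_supportPair hN (nearest_subset_sphere hp) h3
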